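/- Let n ≥ 2, x ∈ 𝔹ⁿ, and t > 0 with t(1−|x|) < 1. Then B_ρ(x, r) ⊂ B_c(x, t) ⊂ B_ρ(x, R), where r = log(1 + 2t(1−|x|)/((1+|x|)(1 + t(1−|x|)))) and R = min{R₁, R₂} with R₁ = 2·arsinh((exp(t(1−|x|)/(1 − t(1−|x|))) − 1)/(1+|x|)) and R₂ = log(1 + 2(exp(t(1−|x|)/(1 − t(1−|x|))) − 1)/(1−|x|)). -/

import Mathlib

/-!
Write `a = ‖x‖`, `b = ‖y‖`, `u = |x - y|`. Every boundary point `p` has `|x - p| ≥ 1 - a` and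
`|p - y| ≥ 1 - b`, so `c(x,y) ≤ u / ((1-a)(1-b))`, while the boundary points nearest to `x` and to
`y` give `c(x,y) ≥ u / ((1-a)(1-a+u))` and `c(x,y) ≥ u / ((1-b)(1-b+u))`. Hence `c(x,y) < t`
follows from `u < t(1-a)(1-b)`, and it forces `u < m (1 - max a b)` with `m = t(1-a)/(1-t(1-a))`.
Both hyperbolic estimates then become one-variable inequalities for
`sinh(ρ/2) = u / √((1-a²)(1-b²))`: the inner ball comes from `log(1 + 2 sinh(ρ/2)) ≤ ρ`, the bound
`R₁` from `√((1-a²)(1-b²)) ≥ 1 - max(a,b)²` and `m < e^m - 1`, and `R₂` from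
`ρ ≤ 2 log(1 + u/(1 - max a b))` and `(1 + m)² ≤ 1 + 2(e^m - 1)`.
-/

open Metric Set

/-- Euclidean `n`-space. -/
abbrev E (n : ℕ) := EuclideanSpace ℝ (Fin n)

/-- The Cassinian metric of a domain `D`:
`c_D(x,y) = sup_{p ∈ ∂D} |x-y| / (|x-p| |p-y|)`. -/
noncomputable def cassinian {n : ℕ} (D : Set (E n)) (x y : E n) : ℝ :=
  ⨆ p ∈ frontier D, dist x y / (dist x p * dist p y)

/-- The hyperbolic metric of the unit ball `𝔹ⁿ`, determined by
`sinh²(ρ(x,y)/2) = |x-y|²/((1-|x|²)(1-|y|²))`. -/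
noncomputable def hyperDist {n : ℕ} (x y : E n) : ℝ :=
  2 * Real.arsinh (dist x y / Real.sqrt ((1 - ‖x‖ ^ 2) * (1 - ‖y‖ ^ 2)))

open Real

lemma one_sub_norm_le_dist_of_norm_eq_one {F : Type*} [SeminormedAddCommGroup F] {p : F}
    (hp : ‖p‖ = 1) (z : F) : 1 - ‖z‖ ≤ dist p z := by
  rw [dist_eq_norm, ← hp]
  exact norm_sub_norm_le p z

lemma exists_norm_eq_one_dist_eq {F : Type*} [NormedAddCommGroup F] [NormedSpace ℝ F]
    [Nontrivial F] {x : F} (hx : ‖x‖ ≤ 1) : ∃ p : F, ‖p‖ = 1 ∧ dist x p = 1 - ‖x‖ := by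
  rcases eq_or_ne x 0 with rfl | hx0
  · obtain ⟨p, hp⟩ := exists_norm_eq F zero_le_one
    exact ⟨p, hp, by simp [hp]⟩
  · have hnorm : 0 < ‖x‖ := norm_pos_iff.2 hx0
    refine ⟨‖x‖⁻¹ • x, by simp [norm_smul, hnorm.ne'], ?_⟩
    have : ‖x‖⁻¹ • x - x = (‖x‖⁻¹ - 1) • x := by rw [sub_smul, one_smul]
    rw [dist_comm, dist_eq_norm, this, norm_smul, Real.norm_of_nonneg
      (sub_nonneg.2 ((one_le_inv₀ hnorm).2 hx)), sub_mul, inv_mul_cancel₀ hnorm.ne', one_mul]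

lemma cassinian_comm {n : ℕ} (D : Set (E n)) (x y : E n) : cassinian D x y = cassinian D y x := by
  refine iSup_congr fun p ↦ iSup_congr fun _ ↦ ?_
  rw [dist_comm x y, dist_comm x p, dist_comm p y, mul_comm]

lemma cassinian_nonneg {n : ℕ} (D : Set (E n)) (x y : E n) : 0 ≤ cassinian D x y :=
  Real.iSup_nonneg fun _ ↦ Real.iSup_nonneg fun _ ↦ by positivity

lemma cassinian_ball_eq {n : ℕ} (x y : E n) : cassinian (ball 0 1) x y =
    ⨆ p ∈ sphere (0 : E n) 1, dist x y / (dist x p * dist p y) := by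
  rw [cassinian, frontier_ball _ one_ne_zero]

section Cassinian

variable {n : ℕ} {x y : E n}

lemma div_dist_mul_dist_le_of_norm_eq_one (hx : ‖x‖ < 1) (hy : ‖y‖ < 1) {p : E n}
    (hp : ‖p‖ = 1) : dist x y / (dist x p * dist p y) ≤ dist x y / ((1 - ‖x‖) * (1 - ‖y‖)) := by
  have := one_sub_norm_le_dist_of_norm_eq_one hp x
  have := one_sub_norm_le_dist_of_norm_eq_one hp y
  rw [dist_comm x p]
  gcongr

lemma cassinian_ball_le (hx : ‖x‖ < 1) (hy : ‖y‖ < 1) :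
    cassinian (ball 0 1) x y ≤ dist x y / ((1 - ‖x‖) * (1 - ‖y‖)) := by
  have : 0 ≤ dist x y / ((1 - ‖x‖) * (1 - ‖y‖)) :=
    div_nonneg dist_nonneg (mul_nonneg (by linarith) (by linarith))
  rw [cassinian_ball_eq]
  exact Real.iSup_le (fun p ↦ Real.iSup_le (fun hp ↦
    div_dist_mul_dist_le_of_norm_eq_one hx hy (mem_sphere_zero_iff_norm.1 hp)) this) this

lemma le_cassinian_ball (hx : ‖x‖ < 1) (hy : ‖y‖ < 1) {p : E n} (hp : ‖p‖ = 1) :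
    dist x y / (dist x p * dist p y) ≤ cassinian (ball 0 1) x y := by
  rw [cassinian_ball_eq]
  refine le_ciSup₂ (f := fun q (_ : q ∈ sphere (0 : E n) 1) ↦ dist x y / (dist x q * dist q y))
    ⟨dist x y / ((1 - ‖x‖) * (1 - ‖y‖)), ?_⟩ p
    (mem_sphere_zero_iff_norm.2 hp)
  rintro _ ⟨_, ⟨q, rfl⟩, ⟨hq, rfl⟩⟩
  exact div_dist_mul_dist_le_of_norm_eq_one hx hy (mem_sphere_zero_iff_norm.1 hq)

lemma div_le_cassinian_ball (hx : ‖x‖ < 1) (hy : ‖y‖ < 1) :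
    dist x y / ((1 - ‖x‖) * (1 - ‖x‖ + dist x y)) ≤ cassinian (ball 0 1) x y := by
  rcases eq_or_ne x y with rfl | hxy
  · simpa using cassinian_nonneg _ x x
  have : Nontrivial (E n) := nontrivial_of_ne x y hxy
  obtain ⟨p, hp, hxp⟩ := exists_norm_eq_one_dist_eq hx.le
  have hpy : dist p y ≤ 1 - ‖x‖ + dist x y := by
    linarith [dist_triangle p x y, dist_comm p x]
  refine le_trans ?_ (le_cassinian_ball hx hy hp)
  have hpy0 : 0 < dist p y := by linarith [one_sub_norm_le_dist_of_norm_eq_one hp y]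
  rw [hxp]
  gcongr

end Cassinian

lemma log_one_add_two_mul_le_two_mul_arsinh {S : ℝ} (hS : 0 ≤ S) :
    log (1 + 2 * S) ≤ 2 * arsinh S := by
  rw [log_le_iff_le_exp (by positivity), show 2 * arsinh S = arsinh S + arsinh S by ring,
    exp_add, exp_arsinh]
  have hsq : √(1 + S ^ 2) ^ 2 = 1 + S ^ 2 := sq_sqrt (by positivity)
  have hone : 1 ≤ √(1 + S ^ 2) := one_le_sqrt.2 (by nlinarith)
  nlinarith

lemma lt_mul_of_div_sqrt_lt {a b t u : ℝ} (ha : 0 ≤ a) (ha1 : a < 1) (hb : 0 ≤ b) (hb1 : b < 1)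
    (ht : 0 < t) (hab : b - a ≤ u)
    (h : u / √((1 - a ^ 2) * (1 - b ^ 2)) < t * (1 - a) / ((1 + a) * (1 + t * (1 - a)))) :
    u < t * ((1 - a) * (1 - b)) := by
  by_contra! hu
  set s := t * (1 - a) with hs
  have hs0 : 0 < s := by nlinarith
  have hu0 : 0 < u := lt_of_lt_of_le (by nlinarith) hu
  have hP : 0 < (1 - a ^ 2) * (1 - b ^ 2) := mul_pos (by nlinarith) (by nlinarith)
  have hG_sq : (s / ((1 + a) * (1 + s))) ^ 2 ≤ t * u / ((1 + a) * (1 + b)) :=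
    calc (s / ((1 + a) * (1 + s))) ^ 2 ≤ s ^ 2 / ((1 + a) * (1 + a + 2 * s)) := by
          have : (1 + a) * (1 + a + 2 * s) ≤ ((1 + a) * (1 + s)) ^ 2 := by
            nlinarith [(by positivity : 0 ≤ (1 + a) * ((1 + a) * s ^ 2 + 2 * a * s))]
          rw [div_pow]
          gcongr
      _ ≤ t * u / ((1 + a) * (1 + a + u)) := by
          have hu_ge : s * (1 - a) ≤ u * (1 + s) := by nlinarith
          have key : t * u * ((1 + a) * (1 + a + 2 * s)) - s ^ 2 * ((1 + a) * (1 + a + u))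
              = t * (1 + a) ^ 2 * (u * (1 + s) - s * (1 - a)) := by rw [hs]; ring
          rw [div_le_div_iff₀ (by positivity) (by positivity)]
          nlinarith [mul_nonneg (by positivity : 0 ≤ t * (1 + a) ^ 2) (sub_nonneg.2 hu_ge)]
      _ ≤ t * u / ((1 + a) * (1 + b)) := by
          gcongr t * u / ((1 + a) * ?_)
          linarith
  have hG : s / ((1 + a) * (1 + s)) * √((1 - a ^ 2) * (1 - b ^ 2)) ≤ u := by
    refine (pow_le_pow_iff_left₀ (by positivity) hu0.le two_ne_zero).1 ?_
    calc (s / ((1 + a) * (1 + s)) * √((1 - a ^ 2) * (1 - b ^ 2))) ^ 2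
        ≤ t * u / ((1 + a) * (1 + b)) * ((1 - a ^ 2) * (1 - b ^ 2)) := by
          rw [mul_pow, sq_sqrt hP.le]
          gcongr
      _ = t * ((1 - a) * (1 - b)) * u := by
          rw [div_mul_eq_mul_div, div_eq_iff (by positivity)]
          ring
      _ ≤ u ^ 2 := by nlinarith
  rw [div_lt_iff₀ (sqrt_pos.2 hP)] at h
  linarith

lemma lt_mul_min_of_lt_mul {A B t u : ℝ} (hB : 0 < B) (ht : 0 < t)
    (htA : t * A < 1) (hxu : u < t * (A * (A + u))) (hyu : u < t * (B * (B + u))) :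
    u < t * A / (1 - t * A) * min A B := by
  rw [div_mul_eq_mul_div, lt_div_iff₀ (by linarith)]
  rcases min_cases A B with ⟨hmin, -⟩ | ⟨hmin, hBA⟩ <;> rw [hmin]
  · nlinarith
  · nlinarith [mul_le_mul_of_nonneg_left hBA.le ht.le]

lemma one_sub_sq_max_le_sqrt {a b : ℝ} (ha : 0 ≤ a) (hb : 0 ≤ b) (ha1 : a < 1) (hb1 : b < 1) :
    1 - max a b ^ 2 ≤ √((1 - a ^ 2) * (1 - b ^ 2)) := by
  have hc1 : max a b < 1 := max_lt ha1 hb1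
  have ha' : a ^ 2 ≤ max a b ^ 2 := pow_le_pow_left₀ ha (le_max_left a b) 2
  have hb' : b ^ 2 ≤ max a b ^ 2 := pow_le_pow_left₀ hb (le_max_right a b) 2
  have hc : 0 ≤ 1 - max a b ^ 2 := by nlinarith [ha.trans (le_max_left a b)]
  rw [le_sqrt hc (mul_nonneg (by linarith) (by linarith)), sq]
  exact mul_le_mul (by linarith) (by linarith) hc (by linarith)

lemma two_mul_arsinh_div_sqrt_lt {a b u m : ℝ} (ha : 0 ≤ a) (hb : 0 ≤ b) (ha1 : a < 1)
    (hb1 : b < 1) (hu : 0 ≤ u) (hum : u < m * (1 - max a b)) :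
    2 * arsinh (u / √((1 - a ^ 2) * (1 - b ^ 2))) < 2 * arsinh ((exp m - 1) / (1 + a)) := by
  have hc1 : 0 < 1 - max a b := sub_pos.2 (max_lt ha1 hb1)
  have hm : 0 < m := pos_of_mul_pos_left (hu.trans_lt hum) hc1.le
  have hmK : m < exp m - 1 := by linarith [add_one_lt_exp hm.ne']
  have hS : u / √((1 - a ^ 2) * (1 - b ^ 2)) < (exp m - 1) / (1 + a) :=
    calc u / √((1 - a ^ 2) * (1 - b ^ 2)) ≤ u / (1 - max a b ^ 2) := by
          gcongr
          · nlinarith [le_max_left a b]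
          · exact one_sub_sq_max_le_sqrt ha hb ha1 hb1
      _ = u / (1 - max a b) / (1 + max a b) := by rw [div_div]; ring_nf
      _ ≤ u / (1 - max a b) / (1 + a) := by gcongr; exact le_max_left a b
      _ < m / (1 + a) := by gcongr; exact (div_lt_iff₀ hc1).2 hum
      _ < (exp m - 1) / (1 + a) := by gcongr
  gcongr
  exact arsinh_lt_arsinh.2 hS

/-- This is `ρ(x,y) ≤ 2 j(x,y)` for the distance-ratio metric
`j(x,y) = log(1 + |x-y| / min(1-|x|, 1-|y|))`. -/
lemma arsinh_div_sqrt_le_log {a b u : ℝ} (ha : 0 ≤ a) (hb : 0 ≤ b) (ha1 : a < 1) (hb1 : b < 1)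
    (hu : 0 ≤ u) (hu2 : u ≤ a + b) :
    arsinh (u / √((1 - a ^ 2) * (1 - b ^ 2))) ≤ log (1 + u / (1 - max a b)) := by
  set c := max a b
  have hc1 : 0 < 1 - c := sub_pos.2 (max_lt ha1 hb1)
  have hu2c : u ≤ 2 * c := by linarith [le_max_left a b, le_max_right a b]
  have hsinh : sinh (log (1 + u / (1 - c)))
      = u * (2 * (1 - c) + u) / (2 * ((1 - c) * (1 - c + u))) := by
    rw [sinh_log (by positivity)]
    field_simp
    ring
  rw [← arsinh_sinh (log _), arsinh_le_arsinh, hsinh]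
  calc u / √((1 - a ^ 2) * (1 - b ^ 2)) ≤ u / (1 - c ^ 2) := by
        gcongr
        · nlinarith [le_max_left a b]
        · exact one_sub_sq_max_le_sqrt ha hb ha1 hb1
    _ ≤ u * (2 * (1 - c) + u) / (2 * ((1 - c) * (1 - c + u))) := by
        rw [div_le_div_iff₀ (by nlinarith [le_max_left a b]) (by positivity)]
        nlinarith [mul_nonneg (mul_nonneg hu (sq_nonneg (1 - c))) (sub_nonneg.2 hu2c)]

lemma two_mul_log_one_add_lt {z m : ℝ} (hz : 0 ≤ z) (hzm : z < m) :
    2 * log (1 + z) < log (1 + 2 * (exp m - 1)) := by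
  have hq := quadratic_le_exp_of_nonneg (hz.trans hzm.le)
  rw [← log_rpow (by positivity), log_lt_log_iff (by positivity) (by nlinarith)]
  norm_cast
  nlinarith

lemma two_mul_arsinh_div_sqrt_lt_log {a b u m : ℝ} (ha : 0 ≤ a) (hb : 0 ≤ b) (ha1 : a < 1)
    (hb1 : b < 1) (hu : 0 ≤ u) (hu2 : u ≤ a + b) (hum : u < m * (1 - max a b)) :
    2 * arsinh (u / √((1 - a ^ 2) * (1 - b ^ 2))) < log (1 + 2 * (exp m - 1) / (1 - a)) := by
  have hc1 : 0 < 1 - max a b := sub_pos.2 (max_lt ha1 hb1)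
  have hm : 0 < m := pos_of_mul_pos_left (hu.trans_lt hum) hc1.le
  have hK : 0 ≤ exp m - 1 := by linarith [add_one_le_exp m]
  calc 2 * arsinh (u / √((1 - a ^ 2) * (1 - b ^ 2)))
      ≤ 2 * log (1 + u / (1 - max a b)) := by
        gcongr
        exact arsinh_div_sqrt_le_log ha hb ha1 hb1 hu hu2
    _ < log (1 + 2 * (exp m - 1)) :=
        two_mul_log_one_add_lt (by positivity) ((div_lt_iff₀ hc1).2 hum)
    _ ≤ log (1 + 2 * (exp m - 1) / (1 - a)) := by
        gcongr
        exact le_div_self (by positivity) (by linarith) (by linarith)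

section UnitBall

variable {n : ℕ} {x y : E n}

lemma cassinian_lt_of_hyperDist_lt (hx : ‖x‖ < 1) (hy : ‖y‖ < 1) {t : ℝ} (ht : 0 < t)
    (h : hyperDist x y < log (1 + 2 * t * (1 - ‖x‖) / ((1 + ‖x‖) * (1 + t * (1 - ‖x‖))))) :
    cassinian (ball 0 1) x y < t := by
  have hdist : ‖y‖ - ‖x‖ ≤ dist x y := by
    rw [dist_comm, dist_eq_norm]; exact norm_sub_norm_le y x
  have hS : log (1 + 2 * (dist x y / √((1 - ‖x‖ ^ 2) * (1 - ‖y‖ ^ 2))))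
      < log (1 + 2 * (t * (1 - ‖x‖) / ((1 + ‖x‖) * (1 + t * (1 - ‖x‖))))) := by
    rw [show 1 + 2 * (t * (1 - ‖x‖) / ((1 + ‖x‖) * (1 + t * (1 - ‖x‖))))
      = 1 + 2 * t * (1 - ‖x‖) / ((1 + ‖x‖) * (1 + t * (1 - ‖x‖))) by ring]
    exact (log_one_add_two_mul_le_two_mul_arsinh (by positivity)).trans_lt h
  have hu := lt_mul_of_div_sqrt_lt (norm_nonneg x) hx (norm_nonneg y) hy ht hdist
    (by linarith [(log_lt_log_iff (by positivity) (by positivity)).1 hS])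
  calc cassinian (ball 0 1) x y ≤ dist x y / ((1 - ‖x‖) * (1 - ‖y‖)) := cassinian_ball_le hx hy
    _ < t := (div_lt_iff₀ (mul_pos (by linarith) (by linarith))).2 hu

lemma dist_lt_of_cassinian_lt (hx : ‖x‖ < 1) (hy : ‖y‖ < 1) {t : ℝ} (ht : 0 < t)
    (ht1 : t * (1 - ‖x‖) < 1) (h : cassinian (ball 0 1) x y < t) :
    dist x y < t * (1 - ‖x‖) / (1 - t * (1 - ‖x‖)) * (1 - max ‖x‖ ‖y‖) := by
  have hx' : 0 < 1 - ‖x‖ := by linarith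
  have hy' : 0 < 1 - ‖y‖ := by linarith
  rw [← min_sub_sub_left]
  refine lt_mul_min_of_lt_mul hy' ht ht1 ?_ ?_
  · rw [← div_lt_iff₀ (by positivity)]
    exact (div_le_cassinian_ball hx hy).trans_lt h
  · rw [← div_lt_iff₀ (by positivity), dist_comm]
    exact (div_le_cassinian_ball hy hx).trans_lt (cassinian_comm _ x y ▸ h)

end UnitBall

theorem hyperbolicBall_subset_cassinianBall_subset'_general (n : ℕ)
    (x : E n) (hx : x ∈ ball (0 : E n) 1) (t : ℝ) (ht : 0 < t)
    (ht1 : t * (1 - ‖x‖) < 1) :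
    {y ∈ ball (0 : E n) 1 |
          hyperDist x y
            < Real.log (1 + 2 * t * (1 - ‖x‖) / ((1 + ‖x‖) * (1 + t * (1 - ‖x‖))))}
        ⊆ {y ∈ ball (0 : E n) 1 | cassinian (ball (0 : E n) 1) x y < t} ∧
      {y ∈ ball (0 : E n) 1 | cassinian (ball (0 : E n) 1) x y < t}
        ⊆ {y ∈ ball (0 : E n) 1 |
          hyperDist x y
            < min
              (2 * Real.arsinh
                ((Real.exp (t * (1 - ‖x‖) / (1 - t * (1 - ‖x‖))) - 1) / (1 + ‖x‖)))
              (Real.log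
                (1 + 2 * (Real.exp (t * (1 - ‖x‖) / (1 - t * (1 - ‖x‖))) - 1) / (1 - ‖x‖)))} := by
  have hx1 : ‖x‖ < 1 := mem_ball_zero_iff.1 hx
  refine ⟨fun y ⟨hy, hρ⟩ ↦ ⟨hy, cassinian_lt_of_hyperDist_lt hx1 (mem_ball_zero_iff.1 hy) ht hρ⟩,
    fun y ⟨hy, hc⟩ ↦ ⟨hy, ?_⟩⟩
  have hy1 : ‖y‖ < 1 := mem_ball_zero_iff.1 hy
  have hu := dist_lt_of_cassinian_lt hx1 hy1 ht ht1 hc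
  have hsum : dist x y ≤ ‖x‖ + ‖y‖ := by rw [dist_eq_norm]; exact norm_sub_le x y
  exact lt_min
    (two_mul_arsinh_div_sqrt_lt (norm_nonneg x) (norm_nonneg y) hx1 hy1 dist_nonneg hu)
    (two_mul_arsinh_div_sqrt_lt_log (norm_nonneg x) (norm_nonneg y) hx1 hy1 dist_nonneg hsum hu)

/-- **Refined inclusion of Cassinian balls of the unit ball between hyperbolic balls.**
Let `x ∈ 𝔹ⁿ`, `t > 0` with `t(1-|x|) < 1`.  Then `B_ρ(x,r) ⊆ B_c(x,t) ⊆ B_ρ(x,R)` with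
`r = log(1 + 2t(1-|x|)/((1+|x|)(1+t(1-|x|))))` and `R = min{R₁, R₂}`, where
`R₁ = 2 arsinh((exp(t(1-|x|)/(1-t(1-|x|))) - 1)/(1+|x|))` and
`R₂ = log(1 + 2(exp(t(1-|x|)/(1-t(1-|x|))) - 1)/(1-|x|))`. -/
theorem hyperbolicBall_subset_cassinianBall_subset' (n : ℕ) (hn : 2 ≤ n)
    (x : E n) (hx : x ∈ ball (0 : E n) 1) (t : ℝ) (ht : 0 < t)
    (ht1 : t * (1 - ‖x‖) < 1) :
    {y ∈ ball (0 : E n) 1 |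
          hyperDist x y
            < Real.log (1 + 2 * t * (1 - ‖x‖) / ((1 + ‖x‖) * (1 + t * (1 - ‖x‖))))}
        ⊆ {y ∈ ball (0 : E n) 1 | cassinian (ball (0 : E n) 1) x y < t} ∧
      {y ∈ ball (0 : E n) 1 | cassinian (ball (0 : E n) 1) x y < t}
        ⊆ {y ∈ ball (0 : E n) 1 |
          hyperDist x y
            < min
              (2 * Real.arsinh
                ((Real.exp (t * (1 - ‖x‖) / (1 - t * (1 - ‖x‖))) - 1) / (1 + ‖x‖)))
              (Real.log
                (1 + 2 * (Real.exp (t * (1 - ‖x‖) / (1 - t * (1 - ‖x‖))) - 1) / (1 - ‖x‖)))} :=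
  hyperbolicBall_subset_cassinianBall_subset'_general n x hx t ht ht1
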